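/- Let θ : Fin d → ℝ, let S(x) = ∑_{|n| ≤ M} ŝ(n) e(nx) be a real trigonometric polynomial of degree at most M with S(x) ≥ χ_I(x) for all x, where χ_I is the indicator of an interval containing 0. Then the number of pairs (i,j) with θ i = θ j (including i = j) is at most ∑_{|n| ≤ M} |ŝ(n)| · |∑_i e(n θ i)|². -/

import Mathlib

/-!
Summing the majorant over all differences, `∑_{i,j} S(θ i - θ j)` dominates the number of
coincident pairs, since `S ≥ 0` everywhere and `S(0) ≥ 1`. Expanding `S` in its Fourier series
turns that sum into `∑_n ŝ(n) |∑_i e(n θ i)|²`, because `e(n(x - y)) = e(nx) · conj (e(ny))`;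
the triangle inequality finishes.
-/

open Complex Finset

variable {ι : Type*} [Fintype ι]

noncomputable def expSum (θ : ι → ℝ) (n : ℤ) : ℂ :=
  ∑ i, exp (2 * Real.pi * I * (n * θ i))

theorem card_filter_eq_le_sum_sub (θ : ι → ℝ) {f : ℝ → ℝ} (hf : ∀ x, 0 ≤ f x) (hf₀ : 1 ≤ f 0) :
    (#{q : ι × ι | θ q.1 = θ q.2} : ℝ) ≤ ∑ q : ι × ι, f (θ q.1 - θ q.2) := by
  rw [← sum_boole]
  refine sum_le_sum fun q _ => ?_
  split_ifs with h
  · rwa [h, sub_self]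
  · exact hf _

theorem exp_mul_sub_eq_mul_conj (n : ℤ) (x y : ℝ) :
    exp (2 * Real.pi * I * (n * ((x - y : ℝ) : ℂ)))
      = exp (2 * Real.pi * I * (n * x)) * starRingEnd ℂ (exp (2 * Real.pi * I * (n * y))) := by
  rw [← exp_conj, ← exp_add]
  congr 1
  simp only [map_mul, conj_I, conj_ofReal, map_ofNat, map_intCast]
  push_cast
  ring

theorem sum_exp_mul_sub_eq_norm_expSum_sq (θ : ι → ℝ) (n : ℤ) :
    ∑ q : ι × ι, exp (2 * Real.pi * I * (n * ((θ q.1 - θ q.2 : ℝ) : ℂ)))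
      = (‖expSum θ n‖ ^ 2 : ℝ) := by
  rw [ofReal_pow, ← mul_conj', expSum, map_sum, sum_mul_sum, Fintype.sum_prod_type]
  simp only [exp_mul_sub_eq_mul_conj]

theorem sum_sub_le_sum_norm_mul_norm_expSum_sq (θ : ι → ℝ) {P : ℝ → ℝ} {s : Finset ℤ}
    {c : ℤ → ℂ} (hP : ∀ x : ℝ, (P x : ℂ) = ∑ n ∈ s, c n * exp (2 * Real.pi * I * (n * x))) :
    ∑ q : ι × ι, P (θ q.1 - θ q.2) ≤ ∑ n ∈ s, ‖c n‖ * ‖expSum θ n‖ ^ 2 := by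
  have hexpand : ((∑ q : ι × ι, P (θ q.1 - θ q.2) : ℝ) : ℂ)
      = ∑ n ∈ s, c n * (‖expSum θ n‖ ^ 2 : ℝ) := by
    simp only [ofReal_sum, hP, ← sum_exp_mul_sub_eq_norm_expSum_sq, mul_sum]
    exact sum_comm
  calc ∑ q : ι × ι, P (θ q.1 - θ q.2)
      ≤ ‖((∑ q : ι × ι, P (θ q.1 - θ q.2) : ℝ) : ℂ)‖ := by
        rw [norm_real, Real.norm_eq_abs]
        exact le_abs_self _
    _ ≤ ∑ n ∈ s, ‖c n * (‖expSum θ n‖ ^ 2 : ℝ)‖ := hexpand ▸ norm_sum_le _ _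
    _ = ∑ n ∈ s, ‖c n‖ * ‖expSum θ n‖ ^ 2 := by
        simp only [norm_mul, norm_real, Real.norm_eq_abs, abs_sq]

theorem stmt_6 (d M : ℕ) (θ : Fin d → ℝ) (I : Set ℝ) (hI : (0 : ℝ) ∈ I)
    (S : ℝ → ℝ) (shat : ℤ → ℂ)
    (hS : ∀ x : ℝ, (S x : ℂ) = ∑ n ∈ Finset.Icc (-(M : ℤ)) (M : ℤ),
        shat n * Complex.exp (2 * Real.pi * Complex.I * (n * x)))
    (hmaj : ∀ x : ℝ, Set.indicator I (fun _ => (1 : ℝ)) x ≤ S x) :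
    ((Finset.univ.filter (fun q : Fin d × Fin d => θ q.1 = θ q.2)).card : ℝ)
      ≤ ∑ n ∈ Finset.Icc (-(M : ℤ)) (M : ℤ), ‖shat n‖ *
          ‖∑ i : Fin d,
            Complex.exp (2 * Real.pi * Complex.I * (n * θ i))‖ ^ 2 := by
  have hS_nonneg : ∀ x, 0 ≤ S x := fun x =>
    (Set.indicator_nonneg (fun _ _ => zero_le_one) x).trans (hmaj x)
  have hS_zero : 1 ≤ S 0 := by simpa [Set.indicator_of_mem hI] using hmaj 0
  exact (card_filter_eq_le_sum_sub θ hS_nonneg hS_zero).trans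
    (sum_sub_le_sum_norm_mul_norm_expSum_sq θ hS)
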